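/- arXiv:1607.07583 — 2 statements merged into one kernel-verified Lean document; each statement's English description precedes it below -/
import Mathlib

section
/- For every integer N ≥ 1, the following identities hold in the formal power series ring ℤ[[x, y, q]]: (i) A_{3N} · (1 − q^{3N}) = (A_{3N−1} + A_{3N−2}) · q^{3N}; (ii) A_{3N+1} · (1 − x q^{3N+1}) = (A_{3N} + A_{3N−1}) · x q^{3N+1}; (iii) A_{3N+2} · (1 − y q^{3N+2}) = (A_{3N+1} + A_{3N}) · y q^{3N+2}. -/
/-- The `i`-th largest part (0-indexed) of the weakly decreasing list of parts of a
partition of `n` (entries beyond the number of parts are `0`, which realizes the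
padding by zeros). -/
def nthPart {n : ℕ} (P : n.Partition) (i : ℕ) : ℕ :=
  ((P.parts.sort (· ≤ ·)).reverse).getD i 0

/-- The `j`-th component (`1 ≤ j ≤ m - 1`) of the alternating sum type modulo `m` of a
partition of `n`: `Σ_j = ∑_i (λ_{(i-1)m+j} - λ_{(i-1)m+j+1})` (1-indexed parts, padded
by zeros; summing over `i < n + 1` covers every nonzero term). -/
def altSumType (m : ℕ) {n : ℕ} (P : n.Partition) (j : ℕ) : ℕ :=
  ∑ i ∈ Finset.range (n + 1), (nthPart P (i * m + (j - 1)) - nthPart P (i * m + j))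

/-- `aN N s1 s2 n` : the number of partitions of `n` with exactly `N` (positive) parts,
every part occurring at most twice, and alternating sum type modulo `3` equal to
`(s1, s2)`. -/
noncomputable def aN (N s1 s2 n : ℕ) : ℕ :=
  Nat.card {P : n.Partition // P.parts.card = N ∧ (∀ p, P.parts.count p ≤ 2) ∧
    altSumType 3 P 1 = s1 ∧ altSumType 3 P 2 = s2}

/-- The formal power series `A_N ∈ ℤ[[x, y, q]]` (variables `x = X 0`, `y = X 1`,
`q = X 2`): `A_0 = 1` and, for `N ≥ 1`,
`A_N = ∑_{Σ₁, Σ₂ ≥ 0, n ≥ 1} a_N(Σ₁, Σ₂; n) x^{Σ₁} y^{Σ₂} q^n`. -/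
noncomputable def Aser (N : ℕ) : MvPowerSeries (Fin 3) ℤ :=
  if N = 0 then 1
  else fun e => if 1 ≤ e 2 then (aN N (e 0) (e 1) (e 2) : ℤ) else 0

/-- The variable `x`. -/
noncomputable def Xv : MvPowerSeries (Fin 3) ℤ := MvPowerSeries.X 0

/-- The variable `y`. -/
noncomputable def Yv : MvPowerSeries (Fin 3) ℤ := MvPowerSeries.X 1

/-- The variable `q`. -/
noncomputable def Qv : MvPowerSeries (Fin 3) ℤ := MvPowerSeries.X 2

/-!
Removing the first column of the Young diagram of a partition with `K` parts, each occurring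
at most twice, leaves a partition of `n - K` with `K`, `K - 1` or `K - 2` parts (at most two
parts equal `1`), still with every part occurring at most twice; conversely a column of height
`K` can be added to any such partition. Of the differences `λ_i - λ_{i+1}` only the one at
`i = K` changes (it drops by `1`), so `Σ_j` drops by exactly `δ_j = [K ≡ j mod 3]`.
Hence, for `K ≥ 3`, `A_K = (A_K + A_{K-1} + A_{K-2}) x^{δ_1} y^{δ_2} q^K`, and each of the three
identities is this relation for `K = 3N`, `3N + 1`, `3N + 2`.
-/

def descList (s : Multiset ℕ) : List ℕ := (s.sort (· ≤ ·)).reverse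

theorem coe_descList (s : Multiset ℕ) : (descList s : Multiset ℕ) = s := by
  rw [descList, Multiset.coe_reverse, Multiset.sort_eq]

theorem length_descList (s : Multiset ℕ) : (descList s).length = s.card := by
  rw [descList, List.length_reverse, Multiset.length_sort]

theorem pairwise_descList (s : Multiset ℕ) : (descList s).Pairwise (· ≥ ·) :=
  List.pairwise_reverse.2 (Multiset.pairwise_sort s _)

theorem descList_eq_of_pairwise {s : Multiset ℕ} {l : List ℕ} (hl : l.Pairwise (· ≥ ·))
    (hs : (l : Multiset ℕ) = s) : descList s = l :=
  List.Perm.eq_of_pairwise' (pairwise_descList s) hl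
    (Multiset.coe_eq_coe.1 (by rw [coe_descList, hs]))

theorem List.getD_le_getD_of_pairwise_ge {l : List ℕ} (hl : l.Pairwise (· ≥ ·)) {i j : ℕ}
    (hij : i ≤ j) : l.getD j 0 ≤ l.getD i 0 := by
  rcases lt_or_ge j l.length with hj | hj
  · rw [List.getD_eq_getElem _ _ hj, List.getD_eq_getElem _ _ (hij.trans_lt hj)]
    rcases hij.eq_or_lt with rfl | h
    · rfl
    · exact List.pairwise_iff_getElem.1 hl _ _ _ _ h
  · rw [List.getD_eq_default _ _ hj]
    exact Nat.zero_le _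

theorem List.getD_filter_ne_zero {l : List ℕ} (hl : l.Pairwise (· ≥ ·)) (i : ℕ) :
    (l.filter (· ≠ 0)).getD i 0 = l.getD i 0 := by
  induction l generalizing i with
  | nil => rfl
  | cons a t ih =>
    rcases Nat.eq_zero_or_pos a with rfl | ha
    · have hzero : ∀ x ∈ t, x = 0 := fun x hx => Nat.le_zero.1 (List.rel_of_pairwise_cons hl hx)
      rw [List.filter_eq_nil_iff.2 (by simpa using hzero)]
      cases i with
      | zero => rfl
      | succ i =>
        rcases h : t[i]? with _ | v
        · simp [List.getD_eq_getElem?_getD, h]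
        · simp [List.getD_eq_getElem?_getD, h, hzero v (List.mem_of_getElem? h)]
    · rw [List.filter_cons_of_pos (by simpa using ha.ne')]
      cases i with
      | zero => rfl
      | succ i => simpa using ih hl.of_cons i

def dropColumn (s : Multiset ℕ) : Multiset ℕ := (s.map (· - 1)).filter (· ≠ 0)

def addColumn (s : Multiset ℕ) (r : ℕ) : Multiset ℕ := s.map (· + 1) + Multiset.replicate r 1

section Columns

variable {s : Multiset ℕ}

theorem pos_of_mem_dropColumn {x : ℕ} (hx : x ∈ dropColumn s) : 0 < x :=
  Nat.pos_of_ne_zero (Multiset.of_mem_filter (p := (· ≠ 0)) hx)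

theorem pos_of_mem_addColumn {r x : ℕ} (hx : x ∈ addColumn s r) : 0 < x := by
  rw [addColumn, Multiset.mem_add, Multiset.mem_map] at hx
  rcases hx with ⟨a, -, rfl⟩ | hx
  · exact a.succ_pos
  · rw [Multiset.eq_of_mem_replicate hx]
    exact one_pos

theorem card_addColumn (r : ℕ) : (addColumn s r).card = s.card + r := by
  simp [addColumn]

theorem sum_addColumn (r : ℕ) : (addColumn s r).sum = s.sum + s.card + r := by
  simp [addColumn, Multiset.sum_map_add]

theorem count_addColumn_one (hs : ∀ x ∈ s, 0 < x) (r : ℕ) : (addColumn s r).count 1 = r := by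
  rw [addColumn, Multiset.count_add, Multiset.count_replicate_self, Multiset.count_map,
    Multiset.filter_eq_nil.2 fun x hx => by have := hs x hx; omega]
  simp

theorem count_addColumn_succ {p : ℕ} (hp : p ≠ 0) (r : ℕ) :
    (addColumn s r).count (p + 1) = s.count p := by
  rw [addColumn, Multiset.count_add, Multiset.count_replicate, if_neg (by omega), add_zero]
  exact Multiset.count_map_eq_count' _ s (add_left_injective 1) p

theorem dropColumn_addColumn (hs : ∀ x ∈ s, 0 < x) (r : ℕ) : dropColumn (addColumn s r) = s := by
  rw [dropColumn, addColumn, Multiset.map_add, Multiset.map_map, Multiset.map_replicate,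
    Multiset.filter_add]
  simp only [Function.comp_def, Nat.add_sub_cancel, Multiset.map_id', Nat.sub_self]
  rw [Multiset.filter_eq_self.2 fun x hx => (hs x hx).ne',
    Multiset.filter_eq_nil.2 fun x hx => by simp [Multiset.eq_of_mem_replicate hx], add_zero]

theorem addColumn_dropColumn (hs : ∀ x ∈ s, 0 < x) : addColumn (dropColumn s) (s.count 1) = s := by
  have hcolumn : (dropColumn s).map (· + 1) = s.filter (fun x => x - 1 ≠ 0) := by
    rw [dropColumn, Multiset.filter_map, Multiset.map_map]
    conv_rhs => rw [← Multiset.map_id (s.filter _)]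
    refine Multiset.map_congr rfl fun x hx => ?_
    have := Multiset.of_mem_filter hx
    simp only [Function.comp_apply, id_eq] at this ⊢
    omega
  have hones : Multiset.replicate (s.count 1) 1 = s.filter (fun x => ¬ x - 1 ≠ 0) := by
    rw [← Multiset.filter_eq']
    exact Multiset.filter_congr fun x hx => by have := hs x hx; omega
  rw [addColumn, hcolumn, hones, Multiset.filter_add_not]

theorem count_le_two_addColumn_iff (hs : ∀ x ∈ s, 0 < x) (r : ℕ) :
    (∀ p, (addColumn s r).count p ≤ 2) ↔ r ≤ 2 ∧ ∀ p, s.count p ≤ 2 := by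
  have hzero : ∀ t : Multiset ℕ, (∀ x ∈ t, 0 < x) → t.count 0 = 0 := fun t ht =>
    Multiset.count_eq_zero.2 fun h => (ht 0 h).false
  constructor
  · intro h
    refine ⟨count_addColumn_one hs r ▸ h 1, fun p => ?_⟩
    rcases p.eq_zero_or_pos with rfl | hp
    · simp [hzero s hs]
    · exact count_addColumn_succ hp.ne' r ▸ h (p + 1)
  · rintro ⟨hr, h⟩ (_ | _ | p)
    · simp [hzero _ fun _ => pos_of_mem_addColumn]
    · rwa [count_addColumn_one hs]
    · rw [count_addColumn_succ p.succ_ne_zero]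
      exact h _

theorem sum_dropColumn (hs : ∀ x ∈ s, 0 < x) : (dropColumn s).sum = s.sum - s.card := by
  conv_rhs => rw [← addColumn_dropColumn hs, sum_addColumn, card_addColumn]
  omega

theorem card_dropColumn_add_count_one (hs : ∀ x ∈ s, 0 < x) :
    (dropColumn s).card + s.count 1 = s.card := by
  conv_rhs => rw [← addColumn_dropColumn hs, card_addColumn]

theorem pairwise_map_sub_one_descList : ((descList s).map (· - 1)).Pairwise (· ≥ ·) :=
  List.pairwise_map.2 <| (pairwise_descList s).imp fun h => Nat.sub_le_sub_right h 1

theorem descList_dropColumn :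
    descList (dropColumn s) = ((descList s).map (· - 1)).filter (· ≠ 0) := by
  refine descList_eq_of_pairwise (pairwise_map_sub_one_descList.sublist List.filter_sublist) ?_
  rw [← Multiset.filter_coe, ← Multiset.map_coe, coe_descList, dropColumn]

theorem getD_descList_dropColumn (i : ℕ) :
    (descList (dropColumn s)).getD i 0 = (descList s).getD i 0 - 1 := by
  rw [descList_dropColumn, List.getD_filter_ne_zero pairwise_map_sub_one_descList]
  exact List.getD_map _ 0 _

theorem getD_descList_eq_zero_iff (hs : ∀ x ∈ s, 0 < x) (i : ℕ) :
    (descList s).getD i 0 = 0 ↔ s.card ≤ i := by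
  rw [← length_descList]
  rcases lt_or_ge i (descList s).length with hi | hi
  · have hmem : (descList s)[i] ∈ s := by
      simpa only [← Multiset.mem_coe, coe_descList] using List.getElem_mem hi
    rw [List.getD_eq_getElem _ _ hi]
    exact iff_of_false (hs _ hmem).ne' hi.not_ge
  · exact iff_of_true (List.getD_eq_default _ _ hi) hi

end Columns

section Partition

variable {n k : ℕ}

def Nat.Partition.dropColumn (P : n.Partition) : (dropColumn P.parts).sum.Partition :=
  ⟨_root_.dropColumn P.parts, pos_of_mem_dropColumn, rfl⟩

theorem Nat.Partition.card_parts_le (P : n.Partition) : P.parts.card ≤ n := by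
  simpa [P.parts_sum] using Multiset.card_nsmul_le_sum (a := 1) fun _ => P.parts_pos

theorem nthPart_antitone (P : n.Partition) : Antitone (nthPart P) :=
  fun _ _ => List.getD_le_getD_of_pairwise_ge (pairwise_descList _)

theorem nthPart_eq_zero_iff (P : n.Partition) (i : ℕ) : nthPart P i = 0 ↔ P.parts.card ≤ i :=
  getD_descList_eq_zero_iff (fun _ => P.parts_pos) i

theorem nthPart_of_parts_eq_dropColumn {P : n.Partition} {Q : k.Partition}
    (h : Q.parts = dropColumn P.parts) (i : ℕ) : nthPart Q i = nthPart P i - 1 := by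
  rw [nthPart, nthPart, h]
  exact getD_descList_dropColumn i

theorem altSumType_eq_sum_range (P : n.Partition) {m B : ℕ} (hm : 0 < m) (hB : n + 1 ≤ B)
    (j : ℕ) : altSumType m P j =
      ∑ i ∈ Finset.range B, (nthPart P (i * m + (j - 1)) - nthPart P (i * m + j)) := by
  refine Finset.sum_subset (Finset.range_subset_range.2 hB) fun i _ hi => ?_
  have hcard := P.card_parts_le
  have hi : n + 1 ≤ i * m := by
    rw [Finset.mem_range, not_lt] at hi
    exact hi.trans (Nat.le_mul_of_pos_right i hm)
  rw [(nthPart_eq_zero_iff P _).2 (by omega)]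
  exact Nat.zero_sub _

theorem Nat.eq_mul_add_iff {K m j i : ℕ} (hj : j < m) : K = i * m + j ↔ K % m = j ∧ i = K / m := by
  constructor
  · rintro rfl
    rw [add_comm, Nat.add_mul_mod_self_right, Nat.mod_eq_of_lt hj,
      Nat.add_mul_div_right _ _ (by omega), Nat.div_eq_of_lt hj, zero_add]
    exact ⟨rfl, rfl⟩
  · rintro ⟨hmod, rfl⟩
    rw [← hmod, Nat.div_add_mod']

theorem altSumType_eq_of_parts_eq_dropColumn {P : n.Partition} {Q : k.Partition}
    (h : Q.parts = dropColumn P.parts) {m j : ℕ} (hj : 0 < j) (hjm : j < m) :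
    altSumType m P j = altSumType m Q j + if P.parts.card % m = j then 1 else 0 := by
  set K := P.parts.card
  have hKn : K ≤ n := P.card_parts_le
  have hterm : ∀ i, nthPart P (i * m + (j - 1)) - nthPart P (i * m + j) =
      (nthPart Q (i * m + (j - 1)) - nthPart Q (i * m + j)) + if K = i * m + j then 1 else 0 := by
    intro i
    have hmono := nthPart_antitone P (show i * m + (j - 1) ≤ i * m + j by omega)
    have hzero₁ := nthPart_eq_zero_iff P (i * m + (j - 1))
    have hzero₂ := nthPart_eq_zero_iff P (i * m + j)
    rw [nthPart_of_parts_eq_dropColumn h, nthPart_of_parts_eq_dropColumn h]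
    generalize i * m = t at *
    split_ifs <;> omega
  rw [altSumType_eq_sum_range P (by omega) (show n + 1 ≤ n + k + 1 by omega),
    altSumType_eq_sum_range Q (by omega) (show k + 1 ≤ n + k + 1 by omega),
    Finset.sum_congr rfl fun i _ => hterm i, Finset.sum_add_distrib]
  simp only [Nat.eq_mul_add_iff hjm]
  congr 1
  split_ifs with hK
  · simp only [hK, true_and, Finset.sum_ite_eq', Finset.mem_range]
    rw [if_pos (by have := Nat.div_le_self K m; omega)]
  · simp [hK]

end Partition

-- `δ_j` of the proof sketch above, for a partition with `K` parts.
def columnDrop (K j : ℕ) : ℕ := if K % 3 = j then 1 else 0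

def IsAtMostTwiceOfType (s₁ s₂ : ℕ) {n : ℕ} (P : n.Partition) : Prop :=
  (∀ p, P.parts.count p ≤ 2) ∧ altSumType 3 P 1 = s₁ ∧ altSumType 3 P 2 = s₂

section Recursion

variable {K n k s₁ s₂ : ℕ}

theorem isAtMostTwiceOfType_iff {P : n.Partition} {Q : k.Partition}
    (h : Q.parts = dropColumn P.parts) :
    IsAtMostTwiceOfType s₁ s₂ P ↔ P.parts.count 1 ≤ 2 ∧ columnDrop P.parts.card 1 ≤ s₁ ∧
      columnDrop P.parts.card 2 ≤ s₂ ∧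
      IsAtMostTwiceOfType (s₁ - columnDrop P.parts.card 1) (s₂ - columnDrop P.parts.card 2) Q := by
  have hP : P.parts = addColumn Q.parts (P.parts.count 1) := by
    rw [h, addColumn_dropColumn fun _ => P.parts_pos]
  have h₁ : altSumType 3 P 1 = altSumType 3 Q 1 + columnDrop P.parts.card 1 :=
    altSumType_eq_of_parts_eq_dropColumn h one_pos (by norm_num)
  have h₂ : altSumType 3 P 2 = altSumType 3 Q 2 + columnDrop P.parts.card 2 :=
    altSumType_eq_of_parts_eq_dropColumn h two_pos (by norm_num)
  rw [IsAtMostTwiceOfType, IsAtMostTwiceOfType, hP, count_le_two_addColumn_iff fun _ => Q.parts_pos,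
    ← hP, h₁, h₂]
  constructor
  · rintro ⟨⟨hc, hQ⟩, hs₁, hs₂⟩
    exact ⟨hc, by omega, by omega, hQ, by omega, by omega⟩
  · rintro ⟨hc, hs₁, hs₂, hQ, hQ₁, hQ₂⟩
    exact ⟨⟨hc, hQ⟩, by omega, by omega⟩

theorem aN_eq_zero (h : ¬ (columnDrop K 1 ≤ s₁ ∧ columnDrop K 2 ≤ s₂ ∧ K ≤ n)) :
    aN K s₁ s₂ n = 0 := by
  refine Nat.card_eq_zero.2 (.inl ⟨fun ⟨P, hcard, hP⟩ => h ?_⟩)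
  obtain ⟨-, hs₁, hs₂, -⟩ := (isAtMostTwiceOfType_iff (Q := P.dropColumn) rfl).1 hP
  exact ⟨hcard ▸ hs₁, hcard ▸ hs₂, hcard ▸ P.card_parts_le⟩

def dropColumnEquiv (hKn : K ≤ n) (hs₁ : columnDrop K 1 ≤ s₁) (hs₂ : columnDrop K 2 ≤ s₂) :
    {P : n.Partition // P.parts.card = K ∧ IsAtMostTwiceOfType s₁ s₂ P} ≃
      {Q : (n - K).Partition // (Q.parts.card ≤ K ∧ K ≤ Q.parts.card + 2) ∧
        IsAtMostTwiceOfType (s₁ - columnDrop K 1) (s₂ - columnDrop K 2) Q} where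
  toFun P := by
    have hsum : (dropColumn P.1.parts).sum = n - K := by
      rw [sum_dropColumn fun _ => P.1.parts_pos, P.1.parts_sum, P.2.1]
    refine ⟨⟨dropColumn P.1.parts, pos_of_mem_dropColumn, hsum⟩, ?_⟩
    obtain ⟨hc, -, -, hQ⟩ := (isAtMostTwiceOfType_iff
      (Q := ⟨dropColumn P.1.parts, pos_of_mem_dropColumn, hsum⟩) rfl).1 P.2.2
    have hcard := card_dropColumn_add_count_one (s := P.1.parts) fun _ => P.1.parts_pos
    rw [P.2.1] at hcard hQ
    exact ⟨⟨by dsimp only; omega, by dsimp only; omega⟩, hQ⟩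
  invFun Q :=
    ⟨⟨addColumn Q.1.parts (K - Q.1.parts.card), pos_of_mem_addColumn, by
        rw [sum_addColumn, Q.1.parts_sum]
        omega⟩, by
      have hcard : (addColumn Q.1.parts (K - Q.1.parts.card)).card = K := by
        rw [card_addColumn]
        omega
      refine ⟨hcard, (isAtMostTwiceOfType_iff (Q := Q.1)
        (dropColumn_addColumn (fun _ => Q.1.parts_pos) _).symm).2 ?_⟩
      simp only [hcard, count_addColumn_one fun _ => Q.1.parts_pos]
      exact ⟨by omega, hs₁, hs₂, Q.2.2⟩⟩
  left_inv P := by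
    refine Subtype.ext (Nat.Partition.ext ?_)
    have hcard := card_dropColumn_add_count_one (s := P.1.parts) fun _ => P.1.parts_pos
    rw [P.2.1] at hcard
    change addColumn (dropColumn P.1.parts) (K - (dropColumn P.1.parts).card) = P.1.parts
    rw [show K - (dropColumn P.1.parts).card = P.1.parts.count 1 by omega,
      addColumn_dropColumn fun _ => P.1.parts_pos]
  right_inv Q := Subtype.ext (Nat.Partition.ext (dropColumn_addColumn (fun _ => Q.1.parts_pos) _))

end Recursion

theorem Nat.card_subtype_le_le_add_two {α : Type*} [Finite α] (f : α → ℕ) (R : α → Prop) {K : ℕ}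
    (hK : 2 ≤ K) :
    Nat.card {x // (f x ≤ K ∧ K ≤ f x + 2) ∧ R x} =
      Nat.card {x // f x = K ∧ R x} + Nat.card {x // f x = K - 1 ∧ R x} +
        Nat.card {x // f x = K - 2 ∧ R x} := by
  classical
  have := Fintype.ofFinite α
  simp only [Nat.card_eq_fintype_card, Fintype.card_subtype, Finset.card_filter,
    ← Finset.sum_add_distrib]
  refine Finset.sum_congr rfl fun x _ => ?_
  by_cases hR : R x
  · simp only [hR, and_true]
    split_ifs <;> omega
  · simp [hR]

theorem aN_eq_ite {K s₁ s₂ n : ℕ} (hK : 2 ≤ K) :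
    aN K s₁ s₂ n =
      if columnDrop K 1 ≤ s₁ ∧ columnDrop K 2 ≤ s₂ ∧ K ≤ n then
        aN K (s₁ - columnDrop K 1) (s₂ - columnDrop K 2) (n - K) +
          aN (K - 1) (s₁ - columnDrop K 1) (s₂ - columnDrop K 2) (n - K) +
          aN (K - 2) (s₁ - columnDrop K 1) (s₂ - columnDrop K 2) (n - K)
      else 0 := by
  split_ifs with h
  · obtain ⟨hs₁, hs₂, hKn⟩ := h
    exact (Nat.card_congr (dropColumnEquiv hKn hs₁ hs₂)).trans
      (Nat.card_subtype_le_le_add_two (fun Q : (n - K).Partition => Q.parts.card) _ hK)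
  · exact aN_eq_zero h

open MvPowerSeries

theorem coeff_Aser {K : ℕ} (hK : K ≠ 0) (e : Fin 3 →₀ ℕ) :
    coeff e (Aser K) = aN K (e 0) (e 1) (e 2) := by
  have hA : Aser K = fun e : Fin 3 →₀ ℕ => if 1 ≤ e 2 then (aN K (e 0) (e 1) (e 2) : ℤ) else 0 :=
    if_neg hK
  rw [coeff_apply, hA]
  dsimp only
  split_ifs with he
  · rfl
  · rw [aN_eq_zero (by omega), Nat.cast_zero]

theorem Xv_pow_mul_Yv_pow_mul_Qv_pow (a b c : ℕ) :
    Xv ^ a * Yv ^ b * Qv ^ c =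
      monomial (Finsupp.single 0 a + Finsupp.single 1 b + Finsupp.single 2 c) 1 := by
  simp only [Xv, Yv, Qv, X_pow_eq, monomial_mul_monomial, mul_one]

theorem Aser_eq_mul {K : ℕ} (hK : 3 ≤ K) :
    Aser K = (Aser K + Aser (K - 1) + Aser (K - 2)) *
      (Xv ^ columnDrop K 1 * Yv ^ columnDrop K 2 * Qv ^ K) := by
  ext e
  rw [Xv_pow_mul_Yv_pow_mul_Qv_pow, coeff_mul_monomial, mul_one, map_add, map_add,
    coeff_Aser (by omega), coeff_Aser (by omega), coeff_Aser (by omega), coeff_Aser (by omega),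
    aN_eq_ite (by omega)]
  simp [Finsupp.le_def, Fin.forall_fin_succ, Finsupp.single_apply]

theorem stmt12 (N : ℕ) (hN : 1 ≤ N) :
    Aser (3 * N) * (1 - Qv ^ (3 * N)) = (Aser (3 * N - 1) + Aser (3 * N - 2)) * Qv ^ (3 * N) ∧
    Aser (3 * N + 1) * (1 - Xv * Qv ^ (3 * N + 1)) =
      (Aser (3 * N) + Aser (3 * N - 1)) * (Xv * Qv ^ (3 * N + 1)) ∧
    Aser (3 * N + 2) * (1 - Yv * Qv ^ (3 * N + 2)) =
      (Aser (3 * N + 1) + Aser (3 * N)) * (Yv * Qv ^ (3 * N + 2)) := by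
  have h₀ := Aser_eq_mul (K := 3 * N) (by omega)
  have h₁ := Aser_eq_mul (K := 3 * N + 1) (by omega)
  have h₂ := Aser_eq_mul (K := 3 * N + 2) (by omega)
  simp only [columnDrop, show 3 * N % 3 = 0 by omega, show (3 * N + 1) % 3 = 1 by omega,
    show (3 * N + 2) % 3 = 2 by omega, show 3 * N + 1 - 1 = 3 * N by omega,
    show 3 * N + 1 - 2 = 3 * N - 1 by omega, show 3 * N + 2 - 1 = 3 * N + 1 by omega,
    show 3 * N + 2 - 2 = 3 * N by omega, zero_ne_one, OfNat.zero_ne_ofNat, OfNat.one_ne_ofNat,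
    OfNat.ofNat_ne_one, ↓reduceIte, pow_zero, pow_one, one_mul] at h₀ h₁ h₂
  refine ⟨?_, ?_, ?_⟩
  · linear_combination h₀
  · linear_combination h₁
  · linear_combination h₂
end

section
/- For every integer N ≥ 1, the identity P_{3N+1} · (1 − x q^{3N+1}) = P_{3N} − P_{3N−2} · x q^{3N+1} holds in the formal power series ring ℤ[[x, y, q]]. -/
/-- The formal power series `P_N = ∑_{i=0}^{N} A_i ∈ ℤ[[x, y, q]]`. -/
noncomputable def Pser (N : ℕ) : MvPowerSeries (Fin 3) ℤ :=
  ∑ i ∈ Finset.range (N + 1), Aser i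
/-!
Lowering every part of a partition counted by `a_{3N+1}(Σ₁, Σ₂; n)` by one (and dropping the
parts that become `0`) is a bijection onto the partitions of `n - (3N+1)` with `3N - 1`, `3N` or
`3N + 1` parts, each part occurring at most twice, of type `(Σ₁ - 1, Σ₂)`: the number of
vanishing parts is the multiplicity of `1`, at most two, and the only difference
`λ_a - λ_{a+1}` that changes is the one at the last part, `a = 3N + 1`, which contributes
to `Σ₁`. Hence `A_{3N+1} = (A_{3N-1} + A_{3N} + A_{3N+1}) x q^{3N+1}`, and the identity is
this relation rewritten in terms of the partial sums `P_M`.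
-/

namespace Multiset

def decParts (s : Multiset ℕ) : Multiset ℕ := (s.filter (1 < ·)).map (· - 1)

def incParts (s : Multiset ℕ) (k : ℕ) : Multiset ℕ := s.map (· + 1) + replicate k 1

lemma pos_of_mem_decParts {s : Multiset ℕ} {x : ℕ} (hx : x ∈ decParts s) : 0 < x := by
  obtain ⟨a, ha, rfl⟩ := mem_map.mp hx
  have := (mem_filter.mp ha).2
  omega

lemma pos_of_mem_incParts {s : Multiset ℕ} {k x : ℕ} (hx : x ∈ incParts s k) : 0 < x := by
  rcases mem_add.mp hx with hx | hx
  · obtain ⟨a, -, rfl⟩ := mem_map.mp hx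
    omega
  · rw [eq_of_mem_replicate hx]
    exact Nat.one_pos

lemma card_incParts (s : Multiset ℕ) (k : ℕ) : card (incParts s k) = card s + k := by
  simp [incParts]

lemma sum_incParts (s : Multiset ℕ) (k : ℕ) : (incParts s k).sum = s.sum + card s + k := by
  simp [incParts, sum_map_add]

lemma count_succ_incParts (s : Multiset ℕ) (k p : ℕ) :
    count (p + 1) (incParts s k) = count p s + if p = 0 then k else 0 := by
  rw [incParts, count_add, count_map_eq_count' _ _ (add_left_injective 1), count_replicate]
  rcases Nat.eq_zero_or_pos p with rfl | hp
  · simp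
  · simp [hp.ne']

lemma count_zero_incParts (s : Multiset ℕ) (k : ℕ) : count 0 (incParts s k) = 0 :=
  count_eq_zero.mpr fun h => (pos_of_mem_incParts h).false

lemma decParts_incParts (s : Multiset ℕ) (k : ℕ) (hs : ∀ x ∈ s, 0 < x) :
    decParts (incParts s k) = s := by
  have hmap : (s.map (· + 1)).filter (1 < ·) = s.map (· + 1) :=
    filter_eq_self.mpr fun x hx => by
      obtain ⟨a, ha, rfl⟩ := mem_map.mp hx
      have := hs a ha
      omega
  have hrep : (replicate k 1).filter (1 < ·) = 0 :=
    filter_eq_nil.mpr fun x hx => by simp [eq_of_mem_replicate hx]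
  simp [decParts, incParts, filter_add, hmap, hrep, map_map]

lemma incParts_decParts (s : Multiset ℕ) (hs : ∀ x ∈ s, 0 < x) :
    incParts (decParts s) (count 1 s) = s := by
  have hbig : (s.filter (1 < ·)).map (fun x => x - 1 + 1) = s.filter (1 < ·) :=
    (map_congr rfl fun x hx => by
      have := (mem_filter.mp hx).2
      exact (Nat.sub_add_cancel this.le : x - 1 + 1 = x)).trans (map_id _)
  have hone : replicate (count 1 s) 1 = s.filter fun x => ¬ 1 < x := by
    rw [← filter_eq' s 1]
    exact filter_congr fun x hx => by have := hs x hx; omega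
  rw [incParts, decParts, map_map, Function.comp_def, hbig, hone, filter_add_not]

lemma card_decParts_add_count_one (s : Multiset ℕ) (hs : ∀ x ∈ s, 0 < x) :
    card (decParts s) + count 1 s = card s := by
  conv_rhs => rw [← incParts_decParts s hs]
  rw [card_incParts]

lemma sum_decParts_add_card (s : Multiset ℕ) (hs : ∀ x ∈ s, 0 < x) :
    (decParts s).sum + card s = s.sum := by
  conv_rhs => rw [← incParts_decParts s hs]
  rw [sum_incParts, ← card_decParts_add_count_one s hs, add_assoc]

lemma count_decParts_le (s : Multiset ℕ) (hs : ∀ x ∈ s, 0 < x) (p : ℕ) :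
    count p (decParts s) ≤ count (p + 1) s := by
  conv_rhs => rw [← incParts_decParts s hs]
  rw [count_succ_incParts]
  exact Nat.le_add_right _ _

end Multiset

lemma List.getD_le_of_forall_le {l : List ℕ} {b : ℕ} (h : ∀ x ∈ l, x ≤ b) (i : ℕ) :
    l.getD i 0 ≤ b := by
  rcases lt_or_ge i l.length with hi | hi
  · rw [List.getD_eq_getElem _ _ hi]
    exact h _ (List.getElem_mem hi)
  · rw [List.getD_eq_default _ _ hi]
    exact Nat.zero_le b

lemma List.getD_map_sub_one_filter_one_lt {l : List ℕ} (hl : l.Pairwise (· ≥ ·)) (i : ℕ) :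
    ((l.filter (1 < ·)).map (· - 1)).getD i 0 = l.getD i 0 - 1 := by
  induction l generalizing i with
  | nil => simp
  | cons a t ih =>
    rw [List.pairwise_cons] at hl
    by_cases ha : 1 < a
    · rw [List.filter_cons_of_pos (by simpa using ha), List.map_cons]
      cases i with
      | zero => rfl
      | succ i => exact ih hl.2 i
    · have ht : t.filter (1 < ·) = [] := List.filter_eq_nil_iff.mpr fun x hx => by
        have := hl.1 x hx
        simp only [decide_eq_true_eq]
        omega
      have hle : (a :: t).getD i 0 ≤ 1 := List.getD_le_of_forall_le (fun x hx => by
        rcases List.mem_cons.mp hx with rfl | hx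
        · omega
        · have := hl.1 x hx
          omega) i
      rw [List.filter_cons_of_neg (by simpa using ha), ht]
      simp only [List.map_nil, List.getD_nil]
      omega

lemma Nat.mul_add_eq_mul_add_one_iff {m i j N : ℕ} (hm : 1 < m) (hj : j < m) :
    i * m + j = m * N + 1 ↔ j = 1 ∧ i = N := by
  refine ⟨fun h => ?_, fun ⟨hj1, hiN⟩ => by rw [hj1, hiN, mul_comm]⟩
  have hj1 : j = 1 := by
    have := congrArg (· % m) h
    simpa [Nat.mul_add_mod, Nat.mod_eq_of_lt hj, Nat.mod_eq_of_lt hm] using this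
  subst hj1
  rw [mul_comm m N, Nat.add_right_cancel_iff] at h
  exact ⟨rfl, Nat.eq_of_mul_eq_mul_right (by omega) h⟩

namespace Nat.Partition

lemma card_parts_le_s14 {n : ℕ} (P : n.Partition) : Multiset.card P.parts ≤ n := by
  simpa [P.parts_sum] using Multiset.card_nsmul_le_sum (a := 1) fun x hx => P.parts_pos hx

lemma nthPart_eq_zero_iff {n : ℕ} (P : n.Partition) (i : ℕ) :
    nthPart P i = 0 ↔ Multiset.card P.parts ≤ i := by
  have hlen : (P.parts.sort (· ≤ ·)).reverse.length = Multiset.card P.parts := by simp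
  rw [nthPart]
  refine ⟨fun h => ?_, fun h => List.getD_eq_default _ _ (hlen ▸ h)⟩
  by_contra! hi
  rw [List.getD_eq_getElem _ _ (hlen ▸ hi)] at h
  have hmem := List.getElem_mem (hlen ▸ hi : i < (P.parts.sort (· ≤ ·)).reverse.length)
  rw [List.mem_reverse, Multiset.mem_sort] at hmem
  exact (P.parts_pos hmem).ne' h

lemma nthPart_of_parts_eq_decParts {n n' : ℕ} {P : n.Partition} {Q : n'.Partition}
    (hQ : Q.parts = P.parts.decParts) (i : ℕ) : nthPart Q i = nthPart P i - 1 := by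
  have hsort :
      Q.parts.sort (· ≤ ·) = ((P.parts.sort (· ≤ ·)).filter (1 < ·)).map (· - 1) := by
    refine List.Perm.eq_of_pairwise' (r := (· ≤ ·)) (Multiset.pairwise_sort _ _)
      (((Multiset.pairwise_sort _ _).filter _).map _ fun a b h => Nat.sub_le_sub_right h 1) ?_
    rw [← Multiset.coe_eq_coe, Multiset.sort_eq, hQ, Multiset.decParts, ← Multiset.map_coe,
      ← Multiset.filter_coe, Multiset.sort_eq]
  rw [nthPart, nthPart, hsort, ← List.map_reverse, ← List.filter_reverse]
  exact List.getD_map_sub_one_filter_one_lt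
    (List.pairwise_reverse.mpr (Multiset.pairwise_sort _ _)) i

lemma altSumType_eq_sum_range {m n : ℕ} (hm : 0 < m) (P : n.Partition) (j : ℕ) {R : ℕ}
    (hR : Multiset.card P.parts ≤ R) :
    altSumType m P j =
      ∑ i ∈ Finset.range R, (nthPart P (i * m + (j - 1)) - nthPart P (i * m + j)) := by
  have hvanish : ∀ i ≥ Multiset.card P.parts,
      nthPart P (i * m + (j - 1)) - nthPart P (i * m + j) = 0 := fun i hi => by
    have : i ≤ i * m := Nat.le_mul_of_pos_right i hm
    rw [(nthPart_eq_zero_iff P _).mpr (by omega)]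
    exact Nat.zero_sub _
  rw [altSumType, Finset.eventually_constant_sum hvanish (by have := P.card_parts_le_s14; omega),
    Finset.eventually_constant_sum hvanish hR]

lemma altSumType_one_pos {m n N : ℕ} (hm : 0 < m) (P : n.Partition)
    (hP : Multiset.card P.parts = m * N + 1) : 0 < altSumType m P 1 := by
  have hN : N < Multiset.card P.parts := by
    have : N ≤ m * N := Nat.le_mul_of_pos_left N hm
    omega
  rw [altSumType_eq_sum_range hm P 1 le_rfl]
  refine lt_of_lt_of_le ?_ (Finset.single_le_sum (fun i _ => Nat.zero_le _)
    (Finset.mem_range.mpr hN))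
  have h0 : nthPart P (N * m + 1) = 0 := (nthPart_eq_zero_iff P _).mpr (by rw [hP, mul_comm])
  have h1 : nthPart P (N * m + (1 - 1)) ≠ 0 :=
    mt (nthPart_eq_zero_iff P _).mp (by rw [hP, mul_comm]; omega)
  omega

lemma altSumType_of_parts_eq_decParts {m n n' N j : ℕ} (hj : 1 ≤ j) (hjm : j < m)
    {P : n.Partition} {Q : n'.Partition} (hQ : Q.parts = P.parts.decParts)
    (hP : Multiset.card P.parts = m * N + 1) :
    altSumType m P j = altSumType m Q j + if j = 1 then 1 else 0 := by
  have hQP : Multiset.card Q.parts ≤ Multiset.card P.parts := by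
    rw [← nthPart_eq_zero_iff, nthPart_of_parts_eq_decParts hQ,
      (nthPart_eq_zero_iff P _).mpr le_rfl]
  -- lowering the parts keeps `λ_a - λ_{a+1}` unless `λ_{a+1}` is the first zero entry
  have hterm : ∀ i, nthPart P (i * m + (j - 1)) - nthPart P (i * m + j) =
      (nthPart Q (i * m + (j - 1)) - nthPart Q (i * m + j)) +
        if i * m + j = m * N + 1 then 1 else 0 := fun i => by
    rw [nthPart_of_parts_eq_decParts hQ, nthPart_of_parts_eq_decParts hQ]
    have h1 := nthPart_eq_zero_iff P (i * m + (j - 1))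
    have h2 := nthPart_eq_zero_iff P (i * m + j)
    rw [hP] at h1 h2
    split_ifs <;> omega
  rw [altSumType_eq_sum_range (by omega) P j le_rfl, altSumType_eq_sum_range (by omega) Q j hQP,
    Finset.sum_congr rfl fun i _ => hterm i, Finset.sum_add_distrib]
  congr 1
  simp_rw [Nat.mul_add_eq_mul_add_one_iff (by omega : 1 < m) hjm]
  split_ifs with hj1
  · simpa [hj1, hP] using Nat.le_mul_of_pos_left N (by omega : 0 < m)
  · simp [hj1]

lemma decParts_spec {n n' N s1 s2 : ℕ} {P : n.Partition} {Q : n'.Partition}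
    (hQ : Q.parts = P.parts.decParts)
    (hP : Multiset.card P.parts = 3 * N + 1 ∧ (∀ p, P.parts.count p ≤ 2) ∧
      altSumType 3 P 1 = s1 + 1 ∧ altSumType 3 P 2 = s2) :
    Multiset.card Q.parts ∈ Finset.Icc (3 * N - 1) (3 * N + 1) ∧
      (∀ p, Q.parts.count p ≤ 2) ∧ altSumType 3 Q 1 = s1 ∧ altSumType 3 Q 2 = s2 := by
  obtain ⟨hcard, hcount, h1, h2⟩ := hP
  have hpos : ∀ x ∈ P.parts, 0 < x := fun x hx => P.parts_pos hx
  have hQcard := P.parts.card_decParts_add_count_one hpos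
  have hone := hcount 1
  have h1' := altSumType_of_parts_eq_decParts le_rfl (by norm_num) hQ hcard
  have h2' := altSumType_of_parts_eq_decParts (j := 2) (by norm_num) (by norm_num) hQ hcard
  refine ⟨Finset.mem_Icc.mpr (by rw [hQ]; omega), fun p => ?_, by simp at h1'; omega,
    by simp at h2'; omega⟩
  rw [hQ]
  exact (P.parts.count_decParts_le hpos p).trans (hcount (p + 1))

lemma incParts_spec {n n' N s1 s2 : ℕ} {P : n.Partition} {Q : n'.Partition}
    (hP : P.parts = Q.parts.incParts (3 * N + 1 - Multiset.card Q.parts))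
    (hQ : Multiset.card Q.parts ∈ Finset.Icc (3 * N - 1) (3 * N + 1) ∧
      (∀ p, Q.parts.count p ≤ 2) ∧ altSumType 3 Q 1 = s1 ∧ altSumType 3 Q 2 = s2) :
    Multiset.card P.parts = 3 * N + 1 ∧ (∀ p, P.parts.count p ≤ 2) ∧
      altSumType 3 P 1 = s1 + 1 ∧ altSumType 3 P 2 = s2 := by
  obtain ⟨hcard, hcount, h1, h2⟩ := hQ
  rw [Finset.mem_Icc] at hcard
  have hpos : ∀ x ∈ Q.parts, 0 < x := fun x hx => Q.parts_pos hx
  have hPcard : Multiset.card P.parts = 3 * N + 1 := by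
    rw [hP, Multiset.card_incParts]
    omega
  have hdec : Q.parts = P.parts.decParts := by rw [hP, Multiset.decParts_incParts _ _ hpos]
  have h1' := altSumType_of_parts_eq_decParts le_rfl (by norm_num) hdec hPcard
  have h2' := altSumType_of_parts_eq_decParts (j := 2) (by norm_num) (by norm_num) hdec hPcard
  refine ⟨hPcard, fun p => ?_, by simp at h1'; omega, by simp at h2'; omega⟩
  rcases p with _ | p
  · rw [hP, Multiset.count_zero_incParts]
    exact Nat.zero_le 2
  · rw [hP, Multiset.count_succ_incParts]
    rcases p with _ | p
    · rw [Multiset.count_eq_zero.mpr fun h => (hpos 0 h).false]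
      simp only [if_true]
      omega
    · simpa using hcount (p + 1)

def decPartsEquiv (N s1 s2 n : ℕ) (hn : 3 * N + 1 ≤ n) :
    {P : n.Partition // Multiset.card P.parts = 3 * N + 1 ∧ (∀ p, P.parts.count p ≤ 2) ∧
      altSumType 3 P 1 = s1 + 1 ∧ altSumType 3 P 2 = s2} ≃
    {Q : (n - (3 * N + 1)).Partition //
      Multiset.card Q.parts ∈ Finset.Icc (3 * N - 1) (3 * N + 1) ∧
      (∀ p, Q.parts.count p ≤ 2) ∧ altSumType 3 Q 1 = s1 ∧ altSumType 3 Q 2 = s2} where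
  toFun P := ⟨⟨P.1.parts.decParts, Multiset.pos_of_mem_decParts, by
      have := P.1.parts.sum_decParts_add_card fun x hx => P.1.parts_pos hx
      rw [P.1.parts_sum, P.2.1] at this
      omega⟩,
    decParts_spec rfl P.2⟩
  invFun Q := ⟨⟨Q.1.parts.incParts (3 * N + 1 - Multiset.card Q.1.parts),
      Multiset.pos_of_mem_incParts, by
      have := Finset.mem_Icc.mp Q.2.1
      rw [Multiset.sum_incParts, Q.1.parts_sum]
      omega⟩,
    incParts_spec rfl Q.2⟩
  left_inv P := by
    have hpos : ∀ x ∈ P.1.parts, 0 < x := fun x hx => P.1.parts_pos hx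
    have hcount : 3 * N + 1 - Multiset.card P.1.parts.decParts = P.1.parts.count 1 := by
      have := P.1.parts.card_decParts_add_count_one hpos
      rw [P.2.1] at this
      omega
    exact Subtype.ext <| Nat.Partition.ext <| by
      simp only [hcount, Multiset.incParts_decParts _ hpos]
  right_inv Q := Subtype.ext <| Nat.Partition.ext <|
    Multiset.decParts_incParts _ _ fun x hx => Q.1.parts_pos hx

end Nat.Partition

lemma Nat.card_subtype_mem_and {α β : Type*} [Finite α] (f : α → β) (t : Finset β)
    (p : α → Prop) :
    Nat.card {a // f a ∈ t ∧ p a} = ∑ b ∈ t, Nat.card {a // f a = b ∧ p a} := by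
  classical
  have := Fintype.ofFinite α
  simp only [Nat.card_eq_fintype_card, Fintype.card_subtype]
  rw [Finset.card_eq_sum_card_fiberwise (f := f) (t := t)
    fun a ha => (by simpa using ha : _ ∧ _).1]
  refine Finset.sum_congr rfl fun b hb => congrArg Finset.card ?_
  ext a
  simp only [Finset.mem_filter, Finset.mem_univ, true_and]
  constructor
  · rintro ⟨⟨-, hp⟩, rfl⟩
    exact ⟨rfl, hp⟩
  · rintro ⟨rfl, hp⟩
    exact ⟨⟨hb, hp⟩, rfl⟩

lemma aN_eq_zero_of_lt {M s1 s2 n : ℕ} (h : n < M) : aN M s1 s2 n = 0 :=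
  Nat.card_eq_zero.mpr <| Or.inl ⟨fun P => by
    have := P.1.card_parts_le_s14
    rw [P.2.1] at this
    omega⟩

lemma aN_three_mul_add_one_zero (N s2 n : ℕ) : aN (3 * N + 1) 0 s2 n = 0 :=
  Nat.card_eq_zero.mpr <| Or.inl ⟨fun P => by
    have := Nat.Partition.altSumType_one_pos (by norm_num) P.1 P.2.1
    rw [P.2.2.2.1] at this
    exact this.false⟩

lemma aN_three_mul_add_one_succ {N s1 s2 n : ℕ} (hn : 3 * N + 1 ≤ n) :
    aN (3 * N + 1) (s1 + 1) s2 n =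
      ∑ k ∈ Finset.Icc (3 * N - 1) (3 * N + 1), aN k s1 s2 (n - (3 * N + 1)) := by
  rw [aN, Nat.card_congr (Nat.Partition.decPartsEquiv N s1 s2 n hn)]
  exact Nat.card_subtype_mem_and (fun Q : (n - (3 * N + 1)).Partition => Multiset.card Q.parts) _
    fun Q => (∀ p, Q.parts.count p ≤ 2) ∧ altSumType 3 Q 1 = s1 ∧ altSumType 3 Q 2 = s2

lemma coeff_Aser_s14 {M : ℕ} (hM : M ≠ 0) (e : Fin 3 →₀ ℕ) :
    MvPowerSeries.coeff e (Aser M) = aN M (e 0) (e 1) (e 2) := by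
  have hA : Aser M = fun e => if 1 ≤ e 2 then (aN M (e 0) (e 1) (e 2) : ℤ) else 0 := if_neg hM
  rw [MvPowerSeries.coeff_apply, hA]
  dsimp only
  split_ifs with he
  · rfl
  · rw [aN_eq_zero_of_lt (by omega), Nat.cast_zero]

lemma Aser_three_mul_add_one {N : ℕ} (hN : 1 ≤ N) :
    Aser (3 * N + 1) =
      (∑ k ∈ Finset.Icc (3 * N - 1) (3 * N + 1), Aser k) * (Xv * Qv ^ (3 * N + 1)) := by
  set d : Fin 3 →₀ ℕ := Finsupp.single 0 1 + Finsupp.single 2 (3 * N + 1)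
  have hd : Xv * Qv ^ (3 * N + 1) = MvPowerSeries.monomial d 1 := by
    rw [Xv, Qv, MvPowerSeries.X_pow_eq, MvPowerSeries.X_def,
      MvPowerSeries.monomial_mul_monomial, one_mul]
  have hd0 : d 0 = 1 := by simp [d]
  have hd1 : d 1 = 0 := by simp [d]
  have hd2 : d 2 = 3 * N + 1 := by simp [d]
  have hle : ∀ e : Fin 3 →₀ ℕ, d ≤ e ↔ 1 ≤ e 0 ∧ 3 * N + 1 ≤ e 2 := fun e => by
    refine ⟨fun h => ⟨hd0 ▸ h 0, hd2 ▸ h 2⟩, fun ⟨h0, h2⟩ i => ?_⟩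
    fin_cases i <;> simp [hd0, hd1, hd2, h0, h2]
  ext e
  rw [hd, MvPowerSeries.coeff_mul_monomial, coeff_Aser_s14 (by omega), mul_one, map_sum]
  by_cases he : d ≤ e
  · rw [if_pos he]
    rw [hle] at he
    obtain ⟨s1, hs1⟩ : ∃ s1, e 0 = s1 + 1 := ⟨e 0 - 1, by omega⟩
    rw [hs1, aN_three_mul_add_one_succ he.2, Nat.cast_sum]
    refine Finset.sum_congr rfl fun k hk => ?_
    rw [coeff_Aser_s14 (by simp at hk; omega)]
    simp [hd0, hd1, hd2, hs1]
  · rw [if_neg he]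
    rw [hle] at he
    rcases not_and_or.mp he with he0 | he2
    · rw [show e 0 = 0 by omega, aN_three_mul_add_one_zero, Nat.cast_zero]
    · rw [aN_eq_zero_of_lt (by omega), Nat.cast_zero]

lemma Pser_eq_add_sum_Icc {a b : ℕ} (h : a ≤ b) :
    Pser b = Pser a + ∑ k ∈ Finset.Icc (a + 1) b, Aser k := by
  rw [Pser, Pser, ← Finset.sum_range_add_sum_Ico _ (by omega : a + 1 ≤ b + 1),
    Finset.Ico_add_one_right_eq_Icc]

theorem stmt14 (N : ℕ) (hN : 1 ≤ N) :
    Pser (3 * N + 1) * (1 - Xv * Qv ^ (3 * N + 1)) =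
      Pser (3 * N) - Pser (3 * N - 2) * (Xv * Qv ^ (3 * N + 1)) := by
  have hA := Aser_three_mul_add_one hN
  have hlast : Pser (3 * N + 1) = Pser (3 * N) + Aser (3 * N + 1) := Finset.sum_range_succ _ _
  have hblock : Pser (3 * N + 1) =
      Pser (3 * N - 2) + ∑ k ∈ Finset.Icc (3 * N - 1) (3 * N + 1), Aser k := by
    rw [Pser_eq_add_sum_Icc (by omega : 3 * N - 2 ≤ 3 * N + 1),
      show 3 * N - 2 + 1 = 3 * N - 1 by omega]
  linear_combination hlast - Xv * Qv ^ (3 * N + 1) * hblock + hA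
end
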